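/- Let $U \in \mathbb{R}^{d_1 \times k}$, let $z_2 \in \mathbb{R}^k$ with $z_2 \neq 0$ and $\tilde z_2 = z_2/\|z_2\|_2$, and let $x_1 \in \mathbb{R}^{d_1}$ with $z_1 := U^T x_1 \neq 0$ and $\tilde z_1 := z_1/\|z_1\|_2$. If the normalized latent representations satisfy $\tilde z_1^T \tilde z_2 = 1$, then the gradient of the common-structure score $f(x) = \big(\tfrac{(U^T x)^T \tilde z_2}{\|U^T x\|_2}\big)\cdot\big((U^T x)^T z_2\big)$ at $x_1$ is a positive scalar multiple of the linear projection direction: $\nabla f(x_1) = \frac{\|z_2\|_2}{\|z_1\|_2}\, U U^T x_1$; in particular $\nabla f(x_1)$ is proportional to $U U^T x_1$. -/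

import Mathlib

/-!
If `z̃₁ᵀ z̃₂ = 1` then, by the equality case of Cauchy–Schwarz, `z₂ = c z₁` with `c = ‖z₂‖/‖z₁‖ > 0`.
The score is `cos(z, z₂) ⟪z, z₂⟫` evaluated at `z = Uᵀ x`. Since the cosine attains its maximum `1`
at `z = z₁`, its derivative vanishes there, so the score has the same derivative at `z₁` as the
linear map `⟪·, z₂⟫ = c ⟪·, z₁⟫`. Pulling back along `Uᵀ` turns the gradient `c z₁` into
`c U Uᵀ x₁`.
-/

open scoped RealInnerProductSpace

/-- Interpret a plain vector as an element of Euclidean space (with the ℓ² norm). -/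
def toE {k : ℕ} (v : Fin k → ℝ) : EuclideanSpace ℝ (Fin k) := WithLp.toLp 2 v

section
variable {F : Type*} [NormedAddCommGroup F] [InnerProductSpace ℝ F]

noncomputable def cosSim (w z : F) : ℝ := ⟪z, ‖w‖⁻¹ • w⟫ / ‖z‖

noncomputable def commonScore (w z : F) : ℝ := cosSim w z * ⟪z, w⟫

theorem cosSim_le_one (w z : F) : cosSim w z ≤ 1 :=
  calc cosSim w z = ⟪z, w⟫ / (‖z‖ * ‖w‖) := by
        rw [cosSim, real_inner_smul_right]; ring
    _ ≤ 1 := (le_abs_self _).trans (abs_real_inner_div_norm_mul_norm_le_one z w)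

theorem cosSim_smul_self {c : ℝ} (hc : 0 < c) {y : F} (hy : y ≠ 0) : cosSim (c • y) y = 1 := by
  have hy' : ‖y‖ ≠ 0 := norm_ne_zero_iff.mpr hy
  simp only [cosSim, norm_smul, Real.norm_eq_abs, abs_of_pos hc, smul_smul, real_inner_smul_right,
    real_inner_self_eq_norm_sq]
  field_simp

theorem differentiableAt_cosSim (w : F) {y : F} (hy : y ≠ 0) : DifferentiableAt ℝ (cosSim w) y := by
  show DifferentiableAt ℝ (fun z => ⟪z, ‖w‖⁻¹ • w⟫ * ‖z‖⁻¹) y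
  exact (differentiableAt_id.inner ℝ (differentiableAt_const _)).mul
    ((differentiableAt_id.norm ℝ hy).inv (norm_ne_zero_iff.mpr hy))

theorem hasFDerivAt_cosSim_smul_self {c : ℝ} (hc : 0 < c) {y : F} (hy : y ≠ 0) :
    HasFDerivAt (cosSim (c • y)) (0 : F →L[ℝ] ℝ) y := by
  have hmax : IsLocalMax (cosSim (c • y)) y :=
    Filter.Eventually.of_forall fun z =>
      (cosSim_le_one (c • y) z).trans_eq (cosSim_smul_self hc hy).symm
  exact hmax.fderiv_eq_zero ▸ (differentiableAt_cosSim (c • y) hy).hasFDerivAt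

theorem hasFDerivAt_commonScore_smul_self {c : ℝ} (hc : 0 < c) {y : F} (hy : y ≠ 0) :
    HasFDerivAt (commonScore (c • y)) (innerSL ℝ (c • y)) y := by
  have hlin : HasFDerivAt (fun z => ⟪z, c • y⟫) (innerSL ℝ (c • y)) y :=
    (innerSL ℝ (c • y)).hasFDerivAt.congr_of_eventuallyEq
      (Filter.Eventually.of_forall fun z => real_inner_comm _ _)
  refine ((hasFDerivAt_cosSim_smul_self hc hy).mul hlin).congr_fderiv ?_
  rw [cosSim_smul_self hc hy, one_smul, smul_zero, add_zero]

theorem eq_smul_of_inner_normalize_eq_one {x y : F} (h : ⟪‖x‖⁻¹ • x, ‖y‖⁻¹ • y⟫ = 1) :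
    y = (‖y‖ / ‖x‖) • x := by
  have hx : x ≠ 0 := by rintro rfl; simp at h
  have hy : y ≠ 0 := by rintro rfl; simp at h
  have hunit : ‖x‖⁻¹ • x = ‖y‖⁻¹ • y :=
    (inner_eq_one_iff_of_norm_eq_one (norm_smul_inv_norm hx) (norm_smul_inv_norm hy)).mp h
  rw [div_eq_mul_inv, mul_smul, hunit, smul_inv_smul₀ (norm_ne_zero_iff.mpr hy)]

end

theorem inner_toE_mulVec_left {m n : ℕ} (M : Matrix (Fin m) (Fin n) ℝ) (x : Fin n → ℝ)
    (v : EuclideanSpace ℝ (Fin m)) :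
    ⟪toE (M.mulVec x), v⟫ = ⟪toE x, toE (M.transpose.mulVec v)⟫ := by
  simp only [toE, EuclideanSpace.inner_eq_star_dotProduct, star_trivial, Matrix.dotProduct_mulVec,
    Matrix.vecMul_transpose, dotProduct_comm]

/-- Boundary case 2: if the normalized latent representations are perfectly correlated, the
gradient of the common-structure score is a positive multiple of the projection `U Uᵀ x₁`. -/
theorem common_score_gradient_proj {d1 k : ℕ}
    (U : Matrix (Fin d1) (Fin k) ℝ)
    (z2 : EuclideanSpace ℝ (Fin k)) (hz2 : z2 ≠ 0)
    (tz2 : EuclideanSpace ℝ (Fin k)) (htz2 : tz2 = ‖z2‖⁻¹ • z2)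
    (x1 : EuclideanSpace ℝ (Fin d1))
    (z1 : EuclideanSpace ℝ (Fin k)) (hz1def : z1 = toE (U.transpose.mulVec x1))
    (hz1 : z1 ≠ 0)
    (tz1 : EuclideanSpace ℝ (Fin k)) (htz1 : tz1 = ‖z1‖⁻¹ • z1)
    (f : EuclideanSpace ℝ (Fin d1) → ℝ)
    (hf : ∀ x : EuclideanSpace ℝ (Fin d1),
      f x = (⟪toE (U.transpose.mulVec x), tz2⟫ / ‖toE (U.transpose.mulVec x)‖) *
        ⟪toE (U.transpose.mulVec x), z2⟫)
    (hcorr : ⟪tz1, tz2⟫ = 1) :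
    HasGradientAt f
      ((‖z2‖ / ‖z1‖) • toE (U.mulVec (U.transpose.mulVec x1))) x1 ∧
    0 < ‖z2‖ / ‖z1‖ := by
  have hpos : 0 < ‖z2‖ / ‖z1‖ := div_pos (norm_pos_iff.mpr hz2) (norm_pos_iff.mpr hz1)
  refine ⟨?_, hpos⟩
  have hz2_eq : z2 = (‖z2‖ / ‖z1‖) • z1 :=
    eq_smul_of_inner_normalize_eq_one (by rwa [htz1, htz2] at hcorr)
  generalize ‖z2‖ / ‖z1‖ = c at hpos hz2_eq ⊢
  let A := (Matrix.toEuclideanLin U.transpose).toContinuousLinearMap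
  have hA : ∀ x, A x = toE (U.transpose.mulVec x) := fun _ => rfl
  have hf_eq : f = commonScore z2 ∘ A := funext fun x => by rw [hf, htz2]; rfl
  have hscore : HasFDerivAt (commonScore z2) (innerSL ℝ z2) (A x1) := by
    rw [hA, ← hz1def, hz2_eq]
    exact hasFDerivAt_commonScore_smul_self hpos hz1
  rw [hasGradientAt_iff_hasFDerivAt, hf_eq]
  refine (hscore.comp x1 A.hasFDerivAt).congr_fderiv ?_
  ext v
  rw [InnerProductSpace.toDual_apply_apply, ContinuousLinearMap.comp_apply, innerSL_apply_apply,
    hz2_eq, real_inner_smul_left, real_inner_smul_left, inner_toE_mulVec_left, ← hz1def,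
    hA]
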